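/- Define nested multiset types by M_0 = {⋆} with weight w(⋆) = 1, and M_{k+1} = the set of finite nonempty multisets of elements of M_k, with weight of a multiset equal to the sum of the weights of its elements (with multiplicity). Then for all k ≥ 1 and n ≥ 1, Φ(k,n) equals the number of elements of M_k of weight n; and for all k ≥ 2 and n ≥ 1, φ(k,n) equals the number of elements of M_k of weight n that contain at least two elements (counted with multiplicity). -/

import Mathlib

/-- A fission chain of slope `≤ k` with `n` leaves: a chain of surjective maps of
finite sets `J₁ ↠ J₂ ↠ ⋯ ↠ J_{k+1}` with `|J₁| = n` and `|J_{k+1}| = 1`.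
We encode `J_{i+1} := Fin (size i)`; the chain is prolonged trivially above
height `k+1` (all later sets necessarily also have one element, since all the
maps are surjective). -/
structure FChain (k n : ℕ) where
  size : ℕ → ℕ
  map : ∀ i, Fin (size i) → Fin (size (i+1))
  surj : ∀ i, Function.Surjective (map i)
  size_zero : size 0 = n
  size_top : size k = 1

/-- A fission chain of slope `≤ k` has slope exactly `k` if `k = 0` or `|J_k| ≥ 2`
(here `J_k = Fin (size (k-1))`). -/
def FChain.ExactSlope {k n : ℕ} (c : FChain k n) : Prop :=
  k = 0 ∨ 2 ≤ c.size (k - 1)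

/-- Isomorphism of fission chains: bijections between the corresponding sets
commuting with all the maps. -/
def FChain.Iso {k n m : ℕ} (c : FChain k n) (d : FChain k m) : Prop :=
  ∃ e : ∀ i, Fin (c.size i) ≃ Fin (d.size i),
    ∀ i x, e (i+1) (c.map i x) = d.map i (e i x)

/-- `Φ(k,n)`: the number of isomorphism classes of fission chains of slope `≤ k`
with `n` leaves. -/
noncomputable def PhiBig (k n : ℕ) : ℕ :=
  Nat.card (Quot (fun c d : FChain k n => c.Iso d))

/-- `φ(k,n)`: the number of isomorphism classes of fission chains of slope
exactly `k` with `n` leaves. -/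
noncomputable def phi (k n : ℕ) : ℕ :=
  Nat.card (Quot (fun c d : {c : FChain k n // c.ExactSlope} => c.1.Iso d.1))

/-- Nested multiset types: `NestedM 0 = {⋆}`, and `NestedM (k+1)` is the type of
finite nonempty multisets of elements of `NestedM k`. -/
def NestedM : ℕ → Type
  | 0 => PUnit
  | k+1 => {s : Multiset (NestedM k) // s ≠ 0}

/-- The weight: `w(⋆) = 1`, and the weight of a multiset is the sum of the
weights of its elements (with multiplicity). -/
def nweight : ∀ k, NestedM k → ℕ
  | 0, _ => 1
  | k+1, s => (s.1.map (nweight k)).sum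

/-! ### basic chain lemmas -/

lemma finOne_eq {nn : ℕ} (h : nn = 1) (a b : Fin nn) : a = b := by
  apply Fin.ext; omega

lemma FChain.size_zero_succ {k n : ℕ} (c : FChain k n) {i : ℕ} (h : c.size i = 0) :
    c.size (i+1) = 0 := by
  by_contra h0
  obtain ⟨x, -⟩ := c.surj i ⟨0, Nat.pos_of_ne_zero h0⟩
  rw [h] at x; exact x.elim0

lemma FChain.size_pos {k n : ℕ} (c : FChain k n) (i : ℕ) : 0 < c.size i := by
  rcases le_or_gt i k with h | h
  · by_contra h0
    have key : ∀ t, c.size (i + t) = 0 := by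
      intro t; induction t with
      | zero => rw [Nat.add_zero]; omega
      | succ t ih => exact c.size_zero_succ ih
    have := key (k - i)
    rw [show i + (k-i) = k by omega, c.size_top] at this; omega
  · have key : ∀ t, 0 < c.size (k + t) := by
      intro t; induction t with
      | zero => rw [Nat.add_zero, c.size_top]; omega
      | succ t ih =>
        show 0 < c.size (k + t + 1)
        have := (c.map (k+t) ⟨0, ih⟩).2
        omega
    have := key (i - k)
    rwa [show k + (i-k) = i by omega] at this

lemma FChain.size_eq_one {k n : ℕ} (c : FChain k n) {j : ℕ} (h : k ≤ j) : c.size j = 1 := by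
  induction j, h using Nat.le_induction with
  | base => exact c.size_top
  | succ j hj ih =>
    have h1 : c.size (j+1) ≤ c.size j := by
      have := Fintype.card_le_of_surjective (c.map j) (c.surj j)
      simpa using this
    have := c.size_pos (j+1)
    omega

/-! ### multiset transport lemmas -/

lemma map_filter_equiv {α β γ : Type*} [Fintype α] [Fintype β] (e : α ≃ β)
    (P : β → Prop) [DecidablePred P] (f : β → γ) :
    (Finset.univ.filter P).val.map f
      = (Finset.univ.filter (fun a => P (e a))).val.map (fun a => f (e a)) := by
  classical
  conv_lhs => rw [← Finset.map_univ_equiv e]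
  rw [Finset.filter_map, Finset.map_val, Multiset.map_map]
  rfl

lemma univ_val_map_equiv {α β γ : Type*} [Fintype α] [Fintype β] (e : α ≃ β) (f : β → γ) :
    (Finset.univ.val.map f : Multiset γ) = Finset.univ.val.map (fun a => f (e a)) := by
  conv_lhs => rw [← Finset.map_univ_equiv e]
  rw [Finset.map_val, Multiset.map_map]
  rfl

lemma univ_val_singleton {α : Type*} [Fintype α] (h : Fintype.card α = 1) (x : α) :
    (Finset.univ : Finset α).val = {x} := by
  have hcard : Multiset.card (Finset.univ : Finset α).val = 1 := by
    simpa [Finset.card_univ] using congrArg id h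
  obtain ⟨a, ha⟩ := Multiset.card_eq_one.mp hcard
  have hx : x ∈ (Finset.univ : Finset α).val := Finset.mem_univ_val x
  rw [ha] at hx ⊢
  rw [Multiset.mem_singleton.mp hx]

/-! ### from chains to nested multisets -/

def nm {k n : ℕ} (c : FChain k n) : ∀ i, Fin (c.size i) → NestedM i
  | 0, _ => PUnit.unit
  | i+1, y =>
    ⟨(Finset.univ.filter (fun x => c.map i x = y)).val.map (nm c i), by
      obtain ⟨x, hx⟩ := c.surj i y
      have hmem : nm c i x ∈ (Finset.univ.filter (fun x => c.map i x = y)).val.map (nm c i) :=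
        Multiset.mem_map_of_mem _ (by simp [hx])
      intro h0
      rw [h0] at hmem
      exact Multiset.notMem_zero _ hmem⟩

lemma nm_succ_val {k n : ℕ} (c : FChain k n) (i : ℕ) (y : Fin (c.size (i+1))) :
    (nm c (i+1) y).1 = (Finset.univ.filter (fun x => c.map i x = y)).val.map (nm c i) := rfl

lemma nweight_succ_val {i : ℕ} (s : NestedM (i+1)) :
    nweight (i+1) s = (s.1.map (nweight i)).sum := rfl

lemma sum_nweight_nm {k n : ℕ} (c : FChain k n) : ∀ i,
    ∑ x : Fin (c.size i), nweight i (nm c i x) = n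
  | 0 => by
    show ∑ _x : Fin (c.size 0), 1 = n
    simp [c.size_zero]
  | i+1 => by
    have IH := sum_nweight_nm c i
    calc ∑ y : Fin (c.size (i+1)), nweight (i+1) (nm c (i+1) y)
        = ∑ y, ∑ x ∈ Finset.univ.filter (fun x => c.map i x = y), nweight i (nm c i x) := by
          refine Finset.sum_congr rfl fun y _ => ?_
          rw [nweight_succ_val, nm_succ_val, Multiset.map_map]
          rfl
      _ = ∑ x, nweight i (nm c i x) := Finset.sum_fiberwise _ _ _
      _ = n := IH

lemma nweight_nm_top {k n : ℕ} (c : FChain k n) (y : Fin (c.size k)) :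
    nweight k (nm c k y) = n := by
  have h := sum_nweight_nm c k
  have h1 : (Finset.univ : Finset (Fin (c.size k))).val = {y} :=
    univ_val_singleton (by simp [c.size_top]) y
  have h2 : ∑ x : Fin (c.size k), nweight k (nm c k x) = nweight k (nm c k y) := by
    show (Finset.univ.val.map (fun x => nweight k (nm c k x))).sum = _
    rw [h1]
    simp
  exact h2.symm.trans h

/-! ### iso implies equal nested multisets -/

lemma nm_iso {k n m : ℕ} (c : FChain k n) (d : FChain k m)
    (e : ∀ i, Fin (c.size i) ≃ Fin (d.size i))
    (he : ∀ i x, e (i+1) (c.map i x) = d.map i (e i x)) :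
    ∀ i x, nm d i (e i x) = nm c i x
  | 0, _ => rfl
  | i+1, y => by
    apply Subtype.ext
    rw [nm_succ_val, nm_succ_val]
    rw [map_filter_equiv (e i)]
    have hcond : ∀ x : Fin (c.size i),
        (d.map i (e i x) = e (i+1) y) = (c.map i x = y) := by
      intro x
      rw [← he i x]
      exact propext (Equiv.apply_eq_iff_eq _)
    simp only [hcond]
    exact Multiset.map_congr rfl fun x _ => nm_iso c d e he i x

/-! ### high levels -/

lemma nm_high {k n m : ℕ} (c : FChain k n) (d : FChain k m)
    (H : ∀ y z, nm c k y = nm d k z) :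
    ∀ j, k ≤ j → ∀ y z, nm c j y = nm d j z := by
  intro j hj
  induction j, hj using Nat.le_induction with
  | base => exact H
  | succ j hj IH =>
    intro y z
    apply Subtype.ext
    rw [nm_succ_val, nm_succ_val]
    rw [Finset.filter_true_of_mem (fun x _ => finOne_eq (c.size_eq_one (by omega)) _ _),
        Finset.filter_true_of_mem (fun x _ => finOne_eq (d.size_eq_one (by omega)) _ _)]
    rw [univ_val_singleton (by simp [c.size_eq_one hj]) (⟨0, c.size_pos j⟩ : Fin (c.size j)),
        univ_val_singleton (by simp [d.size_eq_one hj]) (⟨0, d.size_pos j⟩ : Fin (d.size j))]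
    simpa using IH _ _

/-! ### matching fibers -/

lemma exists_equiv_comm {α β γ : Type*} [Fintype α] [Fintype β] (f : α → γ) (g : β → γ)
    (h : ∀ v, Nat.card {a // f a = v} = Nat.card {b // g b = v}) :
    ∃ e : α ≃ β, ∀ a, g (e a) = f a := by
  classical
  have he : ∀ v : γ, Nonempty ({a // f a = v} ≃ {b // g b = v}) := by
    intro v
    have hv := h v
    rw [Nat.card_eq_fintype_card, Nat.card_eq_fintype_card] at hv
    exact Fintype.card_eq.mp hv
  let σ : ∀ v, {a // f a = v} ≃ {b // g b = v} := fun v => (he v).some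
  refine ⟨((Equiv.sigmaFiberEquiv f).symm.trans (Equiv.sigmaCongrRight σ)).trans
    (Equiv.sigmaFiberEquiv g), fun a => ?_⟩
  exact (σ (f a) ⟨a, rfl⟩).2

lemma card_count {α γ : Type*} [Fintype α] [DecidableEq γ] (P : α → Prop) [DecidablePred P]
    (f : α → γ) (v : γ) :
    Nat.card {x // P x ∧ f x = v}
      = Multiset.count v ((Finset.univ.filter P).val.map f) := by
  classical
  rw [Multiset.count_map, ← Finset.filter_val, Finset.filter_filter]
  rw [Nat.card_eq_fintype_card, Fintype.card_subtype]
  show (Finset.univ.filter fun x => P x ∧ f x = v).card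
      = ((Finset.univ.filter fun a => P a ∧ v = f a)).card
  congr 1
  ext a
  simp [eq_comm]

/-! ### equal nested multisets implies iso -/

def Pprop {k n m : ℕ} (c : FChain k n) (d : FChain k m) (i : ℕ) : Prop :=
  ∃ e : ∀ j, Fin (c.size j) → Fin (d.size j),
    (∀ j, i ≤ j → Function.Bijective (e j)) ∧
    (∀ j, i ≤ j → ∀ x, nm d j (e j x) = nm c j x) ∧
    (∀ j, i ≤ j → ∀ x, e (j+1) (c.map j x) = d.map j (e j x))

lemma P_top {k n m : ℕ} (c : FChain k n) (d : FChain k m)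
    (H : ∀ y z, nm c k y = nm d k z) : Pprop c d k := by
  refine ⟨fun j _ => ⟨0, d.size_pos j⟩, ?_, ?_, ?_⟩
  · intro j hj
    constructor
    · intro a b _
      exact finOne_eq (c.size_eq_one hj) a b
    · intro y
      exact ⟨⟨0, c.size_pos j⟩, finOne_eq (d.size_eq_one hj) _ y⟩
  · intro j hj x
    exact (nm_high c d H j hj x _).symm
  · intro j hj x
    exact finOne_eq (d.size_eq_one (by omega)) _ _

lemma P_step {k n m : ℕ} (c : FChain k n) (d : FChain k m) (i : ℕ)
    (h : Pprop c d (i+1)) : Pprop c d i := by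
  obtain ⟨e, hbij, hT, hcomm⟩ := h
  let E : Fin (c.size (i+1)) ≃ Fin (d.size (i+1)) := Equiv.ofBijective _ (hbij (i+1) le_rfl)
  have hcnt : ∀ v : NestedM i × Fin (d.size (i+1)),
      Nat.card {x : Fin (c.size i) // (nm c i x, e (i+1) (c.map i x)) = v} =
      Nat.card {x : Fin (d.size i) // (nm d i x, d.map i x) = v} := by
    classical
    rintro ⟨mv, y⟩
    have h1 : ∀ x : Fin (c.size i),
        ((nm c i x, e (i+1) (c.map i x)) = (mv, y)) ↔
        (c.map i x = E.symm y ∧ nm c i x = mv) := by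
      intro x
      rw [Prod.mk.injEq]
      constructor
      · rintro ⟨h1, h2⟩
        refine ⟨?_, h1⟩
        have h3 : E (c.map i x) = y := h2
        rw [← h3, Equiv.symm_apply_apply]
      · rintro ⟨h1, h2⟩
        refine ⟨h2, ?_⟩
        show E _ = y
        rw [h1, Equiv.apply_symm_apply]
    have h2 : ∀ x : Fin (d.size i),
        ((nm d i x, d.map i x) = (mv, y)) ↔ (d.map i x = y ∧ nm d i x = mv) := by
      intro x; rw [Prod.mk.injEq]; tauto
    rw [Nat.card_congr (Equiv.subtypeEquivRight h1), Nat.card_congr (Equiv.subtypeEquivRight h2)]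
    rw [card_count (fun x => c.map i x = E.symm y) (nm c i) mv,
        card_count (fun x => d.map i x = y) (nm d i) mv]
    have h3 : nm d (i+1) y = nm c (i+1) (E.symm y) := by
      rw [← hT (i+1) le_rfl (E.symm y)]
      congr 1
      exact (E.apply_symm_apply y).symm
    have h4 : (nm c (i+1) (E.symm y)).1
        = (Finset.univ.filter (fun x => c.map i x = E.symm y)).val.map (nm c i) := rfl
    have h5 : (nm d (i+1) y).1
        = (Finset.univ.filter (fun x => d.map i x = y)).val.map (nm d i) := rfl
    rw [← h4, ← h5, h3]
  obtain ⟨e0, he0⟩ := exists_equiv_comm _ _ hcnt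
  refine ⟨Function.update e i ⇑e0, ?_, ?_, ?_⟩
  · intro j hj
    rcases eq_or_lt_of_le hj with rfl | hlt
    · rw [Function.update_self]
      exact e0.bijective
    · rw [Function.update_of_ne (by omega)]
      exact hbij j (by omega)
  · intro j hj x
    rcases eq_or_lt_of_le hj with rfl | hlt
    · rw [Function.update_self]
      exact (Prod.ext_iff.mp (he0 x)).1
    · rw [Function.update_of_ne (by omega)]
      exact hT j (by omega) x
  · intro j hj x
    rcases eq_or_lt_of_le hj with rfl | hlt
    · rw [Function.update_of_ne (by omega), Function.update_self]
      exact ((Prod.ext_iff.mp (he0 x)).2).symm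
    · rw [Function.update_of_ne (by omega), Function.update_of_ne (by omega)]
      exact hcomm j (by omega) x

lemma nm_eq_iso {k n m : ℕ} (c : FChain k n) (d : FChain k m)
    (H : ∀ y z, nm c k y = nm d k z) : c.Iso d := by
  have key : ∀ t, Pprop c d (k - t) := by
    intro t
    induction t with
    | zero => simpa using P_top c d H
    | succ t ih =>
      by_cases h0 : k - t = 0
      · rw [show k - (t+1) = 0 by omega]
        rwa [h0] at ih
      · have h1 : k - t = (k - (t+1)) + 1 := by omega
        exact P_step c d _ (by rwa [h1] at ih)
  obtain ⟨e, hbij, hT, hcomm⟩ := key k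
  exact ⟨fun j => Equiv.ofBijective _ (hbij j (by omega)), fun j x => hcomm j (by omega) x⟩

/-! ### gluing chains -/

section Glue

variable {k m : ℕ} {w : Fin m → ℕ} (c : ∀ j, FChain k (w j))

def gsz (i : ℕ) : ℕ := if i ≤ k then ∑ j, (c j).size i else 1

noncomputable def gec (i : ℕ) (h : i ≤ k) : Fin (gsz c i) ≃ Σ j, Fin ((c j).size i) :=
  Fintype.equivOfCardEq (by simp [gsz, if_pos h])

lemma gsz_pos (hm : 0 < m) (i : ℕ) : 0 < gsz c i := by
  unfold gsz
  split
  · exact Finset.sum_pos (fun j _ => (c j).size_pos _) ⟨⟨0, hm⟩, Finset.mem_univ _⟩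
  · omega

noncomputable def gmap (hm : 0 < m) (i : ℕ) : Fin (gsz c i) → Fin (gsz c (i+1)) :=
  if h : i + 1 ≤ k then
    fun x => (gec c (i+1) h).symm
      ⟨((gec c i (by omega)) x).1, (c _).map i ((gec c i (by omega)) x).2⟩
  else fun _ => ⟨0, gsz_pos c hm (i+1)⟩

lemma gmap_eq (hm : 0 < m) {i : ℕ} (h : i + 1 ≤ k) (hik : i ≤ k) (p : Σ j, Fin ((c j).size i)) :
    gmap c hm i ((gec c i hik).symm p)
      = (gec c (i+1) h).symm ⟨p.1, (c p.1).map i p.2⟩ := by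
  unfold gmap
  rw [dif_pos h]
  rw [Equiv.apply_symm_apply]

noncomputable def glue (hm : 0 < m) : FChain (k+1) (∑ j, w j) where
  size := gsz c
  map := gmap c hm
  surj := by
    intro i y
    by_cases h : i + 1 ≤ k
    · set p := (gec c (i+1) h) y with hp
      obtain ⟨x, hx⟩ := (c p.1).surj i p.2
      refine ⟨(gec c i (by omega)).symm ⟨p.1, x⟩, ?_⟩
      rw [gmap_eq c hm h (by omega) ⟨p.1, x⟩]
      have h2 : (⟨p.1, (c p.1).map i x⟩ : Σ j, Fin ((c j).size (i+1))) = p := by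
        rw [hx]
      rw [h2, hp, Equiv.symm_apply_apply]
    · refine ⟨⟨0, gsz_pos c hm i⟩, ?_⟩
      show gmap c hm i _ = y
      unfold gmap
      rw [dif_neg h]
      exact finOne_eq (by simp [gsz, h]) _ _
  size_zero := by
    rw [show gsz c 0 = ∑ j, (c j).size 0 from if_pos (Nat.zero_le k)]
    exact Finset.sum_congr rfl fun j _ => (c j).size_zero
  size_top := by simp [gsz]

lemma sigma_filter_map {J : Type*} [Fintype J] [DecidableEq J] {A B : J → Type*}
    [∀ j, Fintype (A j)] [∀ j, DecidableEq (B j)]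
    (F : ∀ j, A j → B j) {γ : Type*} (G : ∀ j, A j → γ) (j : J) (x : B j) :
    (Finset.univ.filter
        (fun p : Σ j, A j => (⟨p.1, F p.1 p.2⟩ : Σ j, B j) = ⟨j, x⟩)).val.map
        (fun p => G p.1 p.2)
      = (Finset.univ.filter (fun z => F j z = x)).val.map (G j) := by
  have hset : (Finset.univ.filter
        (fun p : Σ j, A j => (⟨p.1, F p.1 p.2⟩ : Σ j, B j) = ⟨j, x⟩))
      = (Finset.univ.filter (fun z => F j z = x)).map ⟨Sigma.mk j, sigma_mk_injective⟩ := by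
    ext ⟨j', z⟩
    simp only [Finset.mem_filter, Finset.mem_univ, true_and, Finset.mem_map,
      Function.Embedding.coeFn_mk]
    constructor
    · intro hp
      have h1 : j' = j := congrArg Sigma.fst hp
      subst h1
      exact ⟨z, sigma_mk_injective hp, rfl⟩
    · rintro ⟨z', hz', hz2⟩
      have h1 : j = j' := congrArg Sigma.fst hz2
      subst h1
      have h2 : z' = z := sigma_mk_injective hz2
      subst h2
      rw [hz']
  rw [hset, Finset.map_val, Multiset.map_map]
  rfl

lemma nm_glue (hm : 0 < m) : ∀ i (h : i ≤ k) (j : Fin m) (x : Fin ((c j).size i)),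
    nm (glue c hm) i ((gec c i h).symm ⟨j, x⟩) = nm (c j) i x
  | 0, _, _, _ => rfl
  | i+1, h, j, x => by
    apply Subtype.ext
    rw [nm_succ_val (glue c hm) i ((gec c (i+1) h).symm ⟨j, x⟩)]
    rw [map_filter_equiv (β := Fin ((glue c hm).size i)) ((gec c i (by omega)).symm)]
    have hcond : ∀ p : Σ j', Fin ((c j').size i),
        ((glue c hm).map i ((gec c i (by omega)).symm p) = (gec c (i+1) h).symm ⟨j, x⟩)
        = ((⟨p.1, (c p.1).map i p.2⟩ : Σ j', Fin ((c j').size (i+1))) = ⟨j, x⟩) := by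
      intro p
      have hg : (glue c hm).map i ((gec c i (by omega)).symm p)
          = (gec c (i+1) h).symm ⟨p.1, (c p.1).map i p.2⟩ := gmap_eq c hm h (by omega) p
      rw [hg]
      exact propext (Equiv.apply_eq_iff_eq _)
    refine Eq.trans ?_ (sigma_filter_map (fun j' => (c j').map i) (fun j' => nm (c j') i) j x)
    refine Multiset.map_congr (congrArg Finset.val (Finset.ext fun p => ?_))
      (fun p _ => nm_glue hm i (Nat.le_of_succ_le h) p.1 p.2)
    simp only [Finset.mem_filter, Finset.mem_univ, true_and]
    exact Iff.of_eq (hcond p)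

end Glue

/-! ### surjectivity -/

lemma nm_surj : ∀ k (x : NestedM k), ∃ c : FChain k (nweight k x), ∀ y, nm c k y = x := by
  intro k
  induction k with
  | zero =>
    intro x
    refine ⟨⟨fun _ => 1, fun _ y => y, fun _ y => ⟨y, rfl⟩, rfl, rfl⟩, fun y => rfl⟩
  | succ k IH =>
    rintro ⟨s, hs⟩
    set l := s.toList with hl
    have hlen : 0 < l.length := by
      rw [List.length_pos_iff]
      simp [hl, hs]
    let C : ∀ j : Fin l.length, FChain k (nweight k (l.get j)) := fun j => (IH (l.get j)).choose
    have hC : ∀ j y, nm (C j) k y = l.get j := fun j => (IH (l.get j)).choose_spec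
    have hn : nweight (k+1) ⟨s, hs⟩ = ∑ j : Fin l.length, nweight k (l.get j) := by
      rw [nweight_succ_val (⟨s, hs⟩ : NestedM (k+1))]
      show (Multiset.map (nweight k) s).sum = _
      conv_lhs => rw [← Multiset.coe_toList s]
      rw [← hl, Multiset.map_coe, Multiset.sum_coe]
      rw [Fin.sum_univ_def]
      conv_lhs => rw [← List.map_get_finRange l]
      rw [List.map_map]
      rfl
    rw [hn]
    refine ⟨glue C hlen, fun y => ?_⟩
    apply Subtype.ext
    rw [nm_succ_val]
    have h1 : ∀ z : Fin ((glue C hlen).size k), (glue C hlen).map k z = y :=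
      fun z => finOne_eq ((glue C hlen).size_top) _ _
    rw [Finset.filter_true_of_mem (fun z _ => h1 z)]
    let e2 : (Σ j : Fin l.length, Fin ((C j).size k)) ≃ Fin l.length :=
      ⟨fun p => p.1, fun j => ⟨j, ⟨0, (C j).size_pos k⟩⟩, by
        rintro ⟨j, z⟩
        show (⟨j, ⟨0, (C j).size_pos k⟩⟩ : Σ j, Fin ((C j).size k)) = ⟨j, z⟩
        rw [show z = ⟨0, (C j).size_pos k⟩ from finOne_eq ((C j).size_top) _ _],
        fun j => rfl⟩
    rw [univ_val_map_equiv (β := Fin ((glue C hlen).size k)) (gec C k le_rfl).symm (nm (glue C hlen) k)]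
    rw [Multiset.map_congr rfl
      (fun p _ => (nm_glue C hlen k le_rfl p.1 p.2).trans (hC p.1 p.2))]
    rw [univ_val_map_equiv e2.symm (fun p => l.get p.1)]
    rw [Fin.univ_val_map]
    show ↑(List.ofFn (fun j => l.get j)) = s
    rw [show (List.ofFn fun j => l.get j) = l from List.ofFn_get l]
    exact Multiset.coe_toList s


/-! ### assembly -/

def topIdx {k n : ℕ} (c : FChain k n) : Fin (c.size k) := ⟨0, c.size_pos k⟩

lemma nm_top_eq_of_iso {k n : ℕ} {c d : FChain k n} (h : c.Iso d) :
    nm c k (topIdx c) = nm d k (topIdx d) := by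
  obtain ⟨e, he⟩ := h
  have h1 : nm d k (e k (topIdx c)) = nm c k (topIdx c) := nm_iso c d e he k (topIdx c)
  rw [← h1]
  congr 1
  exact finOne_eq d.size_top _ _

lemma phiBig_bij (k n : ℕ) :
    PhiBig k n = Nat.card {x : NestedM k // nweight k x = n} := by
  refine Nat.card_eq_of_bijective
    (Quot.lift (fun c : FChain k n =>
        (⟨nm c k (topIdx c), nweight_nm_top c _⟩ : {x : NestedM k // nweight k x = n}))
      (fun c d h => Subtype.ext (nm_top_eq_of_iso h))) ⟨?_, ?_⟩
  · intro q1 q2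
    induction q1 using Quot.ind with
    | _ c =>
    induction q2 using Quot.ind with
    | _ d =>
    intro h
    apply Quot.sound
    apply nm_eq_iso
    intro y z
    have h0 : nm c k (topIdx c) = nm d k (topIdx d) := congrArg Subtype.val h
    rw [finOne_eq c.size_top y (topIdx c), finOne_eq d.size_top z (topIdx d)]
    exact h0
  · rintro ⟨x, hx⟩
    obtain ⟨c, hc⟩ := nm_surj k x
    subst hx
    exact ⟨Quot.mk _ c, Subtype.ext (hc _)⟩

lemma card_nm_top {j n : ℕ} (c : FChain (j+1) n) (y : Fin (c.size (j+1))) :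
    Multiset.card (nm c (j+1) y).1 = c.size j := by
  rw [nm_succ_val, Multiset.card_map]
  rw [Finset.filter_true_of_mem (fun x _ => finOne_eq c.size_top _ _)]
  show (Finset.univ : Finset (Fin (c.size j))).card = c.size j
  simp

lemma phi_bij (j n : ℕ) :
    phi (j+1) n
      = Nat.card {x : NestedM (j+1) // nweight (j+1) x = n ∧ 2 ≤ Multiset.card x.1} := by
  refine Nat.card_eq_of_bijective
    (Quot.lift (fun c : {c : FChain (j+1) n // c.ExactSlope} =>
        (⟨nm c.1 (j+1) (topIdx c.1), nweight_nm_top c.1 _, by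
          rw [card_nm_top]
          rcases c.2 with h | h
          · omega
          · simpa using h⟩ :
          {x : NestedM (j+1) // nweight (j+1) x = n ∧ 2 ≤ Multiset.card x.1}))
      (fun c d h => Subtype.ext (nm_top_eq_of_iso h))) ⟨?_, ?_⟩
  · intro q1 q2
    induction q1 using Quot.ind with
    | _ c =>
    induction q2 using Quot.ind with
    | _ d =>
    intro h
    apply Quot.sound
    apply nm_eq_iso
    intro y z
    have h0 : nm c.1 (j+1) (topIdx c.1) = nm d.1 (j+1) (topIdx d.1) := congrArg Subtype.val h
    rw [finOne_eq c.1.size_top y (topIdx c.1), finOne_eq d.1.size_top z (topIdx d.1)]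
    exact h0
  · rintro ⟨x, hx, hcard⟩
    obtain ⟨c, hc⟩ := nm_surj (j+1) x
    subst hx
    have hslope : c.ExactSlope := by
      right
      show 2 ≤ c.size (j+1-1)
      have := card_nm_top c (topIdx c)
      rw [hc (topIdx c)] at this
      simpa [← this] using hcard
    exact ⟨Quot.mk _ ⟨c, hslope⟩, Subtype.ext (hc _)⟩


/-- Φ(k,n) equals the number of elements of `NestedM k` of weight n (k ≥ 1, n ≥ 1),
and φ(k,n) for k ≥ 2 equals the number of elements of `NestedM k` of weight n with
at least two members counted with multiplicity. -/
theorem PhiBig_phi_eq_card_nested :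
    (∀ k n : ℕ, 1 ≤ k → 1 ≤ n →
      PhiBig k n = Nat.card {x : NestedM k // nweight k x = n}) ∧
    (∀ j n : ℕ, 1 ≤ j → 1 ≤ n →
      phi (j+1) n =
        Nat.card {x : NestedM (j+1) // nweight (j+1) x = n ∧ 2 ≤ Multiset.card x.1}) := by
  exact ⟨fun k n _ _ => phiBig_bij k n, fun j n _ _ => phi_bij j n⟩
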